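/- arXiv:math/9912022 — 6 statements merged into one kernel-verified Lean document; each statement's English description precedes it below -/
import Mathlib

section
/- A connected graph G is a König-Egerváry graph if and only if there exists a stable set S ⊆ V(G) with |S| ≥ |V(G) − S| such that the bipartite set of edges between S and V(G) − S contains a matching of size |V(G) − S|. -/
open Finset

variable {V : Type*}

/-- A stable (independent) set of vertices. -/
def IsStableSet (G : SimpleGraph V) (s : Finset V) : Prop :=
  ∀ x ∈ s, ∀ y ∈ s, ¬ G.Adj x y

/-- The stability number α(G). -/
noncomputable def stabNum (G : SimpleGraph V) : ℕ :=
  sSup {n | ∃ s : Finset V, IsStableSet G s ∧ s.card = n}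

/-- A matching: a set of edges of `G`, pairwise vertex-disjoint. -/
def IsMatchingSet (G : SimpleGraph V) (M : Finset (Sym2 V)) : Prop :=
  (∀ e ∈ M, e ∈ G.edgeSet) ∧
    ∀ e ∈ M, ∀ f ∈ M, e ≠ f → ∀ v : V, v ∈ e → v ∉ f

/-- The matching number μ(G). -/
noncomputable def matchNum (G : SimpleGraph V) : ℕ :=
  sSup {n | ∃ M : Finset (Sym2 V), IsMatchingSet G M ∧ M.card = n}

/-- A maximum stable set. -/
def IsMaxStableSet (G : SimpleGraph V) (s : Finset V) : Prop :=
  IsStableSet G s ∧ s.card = stabNum G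

/-- A maximum matching. -/
def IsMaxMatching (G : SimpleGraph V) (M : Finset (Sym2 V)) : Prop :=
  IsMatchingSet G M ∧ M.card = matchNum G

/-- A perfect matching: a matching covering all vertices. -/
def IsPerfectMatchingSet (G : SimpleGraph V) (M : Finset (Sym2 V)) : Prop :=
  IsMatchingSet G M ∧ ∀ v : V, ∃ e ∈ M, v ∈ e

def HasPerfectMatching (G : SimpleGraph V) : Prop :=
  ∃ M, IsPerfectMatchingSet G M

/-- A near-perfect matching: exactly one vertex is uncovered. -/
def HasNearPerfectMatching (G : SimpleGraph V) : Prop :=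
  ∃ M, IsMatchingSet G M ∧
    ∃ u : V, (∀ e ∈ M, u ∉ e) ∧ ∀ v : V, v ≠ u → ∃ e ∈ M, v ∈ e

/-- A König-Egerváry graph: α(G) + μ(G) = |V(G)|. -/
def KonigEgervary (G : SimpleGraph V) : Prop :=
  stabNum G + matchNum G = Nat.card V

/-- G is α⁺-stable: adding any new edge leaves the stability number unchanged. -/
def AlphaPlusStable (G : SimpleGraph V) : Prop :=
  ∀ u v : V, u ≠ v → ¬ G.Adj u v →
    stabNum (G ⊔ SimpleGraph.fromEdgeSet {s(u, v)}) = stabNum G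

/-- A blossom relative to the matching `M`: an odd cycle `x₀x₁…x₂ₖx₀` whose edges
`x₁x₂, x₃x₄, …, x₂ₖ₋₁x₂ₖ` belong to `M`. -/
def HasBlossom (G : SimpleGraph V) (M : Finset (Sym2 V)) : Prop :=
  ∃ k : ℕ, 0 < k ∧ ∃ x : ℕ → V,
    (∀ i, i ≤ 2 * k → ∀ j, j ≤ 2 * k → x i = x j → i = j) ∧
    (∀ i < 2 * k, G.Adj (x i) (x (i + 1))) ∧
    G.Adj (x (2 * k)) (x 0) ∧
    ∀ i < k, s(x (2 * i + 1), x (2 * i + 2)) ∈ M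

/-- G is blossom-free: no blossom relative to any maximum matching. -/
def BlossomFree (G : SimpleGraph V) : Prop :=
  ∀ M : Finset (Sym2 V), IsMaxMatching G M → ¬ HasBlossom G M

section Aux

variable [Fintype V] [DecidableEq V] {G : SimpleGraph V}

lemma stab_bdd : BddAbove {n | ∃ s : Finset V, IsStableSet G s ∧ s.card = n} := by
  refine ⟨Fintype.card V, ?_⟩
  rintro n ⟨s, -, rfl⟩
  exact s.card_le_univ

lemma match_bdd : BddAbove {n | ∃ M : Finset (Sym2 V), IsMatchingSet G M ∧ M.card = n} := by
  refine ⟨Fintype.card (Sym2 V), ?_⟩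
  rintro n ⟨M, -, rfl⟩
  exact M.card_le_univ

lemma le_stabNum {s : Finset V} (hs : IsStableSet G s) : s.card ≤ stabNum G :=
  le_csSup stab_bdd ⟨s, hs, rfl⟩

lemma le_matchNum {M : Finset (Sym2 V)} (hM : IsMatchingSet G M) : M.card ≤ matchNum G :=
  le_csSup match_bdd ⟨M, hM, rfl⟩

lemma exists_max_stable (G : SimpleGraph V) :
    ∃ s : Finset V, IsStableSet G s ∧ s.card = stabNum G :=
  Nat.sSup_mem (s := {n | ∃ s : Finset V, IsStableSet G s ∧ s.card = n})
    ⟨0, ∅, by intro x hx; simp at hx, rfl⟩ stab_bdd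

lemma exists_max_matching (G : SimpleGraph V) :
    ∃ M : Finset (Sym2 V), IsMatchingSet G M ∧ M.card = matchNum G :=
  Nat.sSup_mem (s := {n | ∃ M : Finset (Sym2 V), IsMatchingSet G M ∧ M.card = n})
    ⟨0, ∅, ⟨by simp, by simp⟩, rfl⟩ match_bdd

/-- Pick a vertex of the edge `e` lying in `t`, if one exists. -/
noncomputable def pickIn (t : Finset V) (e : Sym2 V) : V :=
  if h : ∃ v, v ∈ e ∧ v ∈ t then h.choose else (Quot.out e).1

lemma pickIn_spec {t : Finset V} {e : Sym2 V} (h : ∃ v, v ∈ e ∧ v ∈ t) :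
    pickIn t e ∈ e ∧ pickIn t e ∈ t := by
  rw [pickIn, dif_pos h]; exact h.choose_spec

lemma pickIn_injOn {M : Finset (Sym2 V)} {t : Finset V}
    (hM : IsMatchingSet G M) (h : ∀ e ∈ M, ∃ v, v ∈ e ∧ v ∈ t) :
    Set.InjOn (pickIn t) M := by
  intro e he f hf heq
  by_contra hne
  have h1 := pickIn_spec (h e he)
  have h2 := pickIn_spec (h f hf)
  exact hM.2 e he f hf hne _ h1.1 (by rw [heq]; exact h2.1)

lemma edge_has_outside {s : Finset V} {M : Finset (Sym2 V)}
    (hs : IsStableSet G s) (hM : IsMatchingSet G M) :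
    ∀ e ∈ M, ∃ v, v ∈ e ∧ v ∈ Finset.univ \ s := by
  intro e he
  revert he
  induction e using Sym2.ind with
  | _ a b =>
    intro he
    have hadj : G.Adj a b := (G.mem_edgeSet).1 (hM.1 _ he)
    by_contra hc
    push_neg at hc
    simp only [Finset.mem_sdiff, Finset.mem_univ, true_and, not_not] at hc
    exact hs a (hc a (by simp)) b (hc b (by simp)) hadj

lemma matching_le {s : Finset V} {M : Finset (Sym2 V)}
    (hs : IsStableSet G s) (hM : IsMatchingSet G M) :
    M.card ≤ (Finset.univ \ s).card :=
  Finset.card_le_card_of_injOn (pickIn (Finset.univ \ s))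
    (fun e he => (pickIn_spec (edge_has_outside hs hM e he)).2)
    (pickIn_injOn hM (edge_has_outside hs hM))

lemma stab_add_match_le : stabNum G + matchNum G ≤ Fintype.card V := by
  obtain ⟨s, hs, hscard⟩ := exists_max_stable G
  obtain ⟨M, hM, hMcard⟩ := exists_max_matching G
  have h := matching_le hs hM
  rw [Finset.card_sdiff_of_subset (Finset.subset_univ s), Finset.card_univ] at h
  have h4 : s.card ≤ Fintype.card V := s.card_le_univ
  omega

end Aux

theorem stmt_3 [Fintype V] [DecidableEq V] (G : SimpleGraph V)
    (hconn : G.Connected) :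
    KonigEgervary G ↔
      ∃ S : Finset V, IsStableSet G S ∧ (Finset.univ \ S).card ≤ S.card ∧
        ∃ M : Finset (Sym2 V), IsMatchingSet G M ∧ M.card = (Finset.univ \ S).card ∧
          ∀ e ∈ M, ∃ a ∈ S, ∃ b ∈ Finset.univ \ S, e = s(a, b) := by
  rw [KonigEgervary, Nat.card_eq_fintype_card]
  constructor
  · intro hKE
    obtain ⟨s, hs, hscard⟩ := exists_max_stable G
    obtain ⟨M, hM, hMcard⟩ := exists_max_matching G
    have hle := matching_le hs hM
    have hsle : s.card ≤ Fintype.card V := s.card_le_univ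
    have hT : (Finset.univ \ s).card = M.card := by
      rw [Finset.card_sdiff_of_subset (Finset.subset_univ s), Finset.card_univ]
      rw [Finset.card_sdiff_of_subset (Finset.subset_univ s), Finset.card_univ] at hle
      omega
    have hout := edge_has_outside hs hM
    have himg : M.image (pickIn (Finset.univ \ s)) = Finset.univ \ s := by
      apply Finset.eq_of_subset_of_card_le
      · intro v hv
        obtain ⟨e, he, rfl⟩ := Finset.mem_image.1 hv
        exact (pickIn_spec (hout e he)).2
      · rw [Finset.card_image_of_injOn (pickIn_injOn hM hout), hT]
    have hstruct : ∀ e ∈ M, ∃ a ∈ s, ∃ b ∈ Finset.univ \ s, e = s(a, b) := by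
      intro e he
      revert he
      induction e using Sym2.ind with
      | _ x y =>
        intro he
        have hadj : G.Adj x y := (G.mem_edgeSet).1 (hM.1 _ he)
        have hxy : x ≠ y := hadj.ne
        have key : ∀ w, w ∈ (s(x, y) : Sym2 V) → w ∈ Finset.univ \ s →
            w = pickIn (Finset.univ \ s) s(x, y) := by
          intro w hw hws
          by_contra hne
          have hw' : w ∈ M.image (pickIn (Finset.univ \ s)) := by rw [himg]; exact hws
          obtain ⟨f, hf, hfw⟩ := Finset.mem_image.1 hw'
          have hfe : f ≠ s(x, y) := by
            rintro rfl
            exact hne hfw.symm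
          exact hM.2 f hf s(x, y) he hfe w (hfw ▸ (pickIn_spec (hout f hf)).1) hw
        by_cases hx : x ∈ s
        · have hy : y ∉ s := fun hy => hs x hx y hy hadj
          exact ⟨x, hx, y, by simp [hy], rfl⟩
        · have hy : y ∈ s := by
            by_contra hy
            have h1 := key x (by simp) (by simp [hx])
            have h2 := key y (by simp) (by simp [hy])
            exact hxy (h1.trans h2.symm)
          exact ⟨y, hy, x, by simp [hx], Sym2.eq_swap⟩
    have hin : ∀ e ∈ M, ∃ v, v ∈ e ∧ v ∈ s := by
      intro e he
      obtain ⟨a, ha, b, hb, rfl⟩ := hstruct e he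
      exact ⟨a, by simp, ha⟩
    have hSle : (Finset.univ \ s).card ≤ s.card := by
      rw [hT]
      exact Finset.card_le_card_of_injOn (pickIn s)
        (fun e he => (pickIn_spec (hin e he)).2) (pickIn_injOn hM hin)
    exact ⟨s, hs, hSle, M, hM, hT.symm, hstruct⟩
  · rintro ⟨S, hS, -, M, hM, hMcard, -⟩
    have h1 : S.card ≤ stabNum G := le_stabNum hS
    have h2 : M.card ≤ matchNum G := le_matchNum hM
    have h3 : stabNum G + matchNum G ≤ Fintype.card V := stab_add_match_le
    have h4 : S.card ≤ Fintype.card V := S.card_le_univ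
    rw [Finset.card_sdiff_of_subset (Finset.subset_univ S), Finset.card_univ] at hMcard
    omega
end

section
/- In a König-Egerváry graph G, every maximum matching is contained in the edge cut (S, V − S) for every maximum stable set S; that is, no edge of a maximum matching joins two vertices outside S or two vertices of S. -/
open Finset

variable {V : Type*}

theorem stmt_4 [Fintype V] (G : SimpleGraph V)
    (hKE : KonigEgervary G)
    (M : Finset (Sym2 V)) (hM : IsMaxMatching G M)
    (S : Finset V) (hS : IsMaxStableSet G S) :
    ∀ e ∈ M, ∀ x y : V, e = s(x, y) → (x ∈ S ↔ y ∉ S) := by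
  classical
  obtain ⟨⟨hMedge, hMdisj⟩, hMcard⟩ := hM
  obtain ⟨hSstable, hScard⟩ := hS
  set out : Sym2 V → Finset V := fun e => Finset.univ.filter (fun v => v ∈ e ∧ v ∉ S)
    with hout
  have hdisj : (M : Set (Sym2 V)).PairwiseDisjoint out := by
    intro e he f hf hef
    simp only [Finset.disjoint_left, hout, Finset.mem_filter]
    rintro v ⟨-, hv, -⟩ ⟨-, hv', -⟩
    exact hMdisj e he f hf hef v hv hv'
  have hsub : M.biUnion out ⊆ Sᶜ := by
    intro v hv
    simp only [Finset.mem_biUnion, hout, Finset.mem_filter] at hv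
    obtain ⟨e, he, -, -, hv⟩ := hv
    simpa using hv
  have hcardSc : Sᶜ.card = M.card := by
    have h1 : Fintype.card V = S.card + M.card := by
      rw [hScard, hMcard, ← Nat.card_eq_fintype_card]; exact hKE.symm
    rw [Finset.card_compl, h1]; omega
  have hsum : ∑ e ∈ M, (out e).card ≤ M.card := by
    rw [← Finset.card_biUnion (fun e he f hf hef => hdisj he hf hef)]
    calc _ ≤ Sᶜ.card := Finset.card_le_card hsub
    _ = M.card := hcardSc
  have hone : ∀ e ∈ M, 1 ≤ (out e).card := by
    intro e he
    induction e using Sym2.ind with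
    | _ a b =>
      have hadj : G.Adj a b := (SimpleGraph.mem_edgeSet G).mp (hMedge _ he)
      rcases Classical.em (a ∈ S) with ha | ha
      · have hb : b ∉ S := fun hb => hSstable a ha b hb hadj
        have : b ∈ out s(a,b) := by simp [hout, hb]
        exact Finset.card_pos.mpr ⟨b, this⟩
      · have : a ∈ out s(a,b) := by simp [hout, ha]
        exact Finset.card_pos.mpr ⟨a, this⟩
  rintro e he x y rfl
  have hadj : G.Adj x y := (SimpleGraph.mem_edgeSet G).mp (hMedge _ he)
  constructor
  · intro hx hy
    exact hSstable x hx y hy hadj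
  · intro hy
    by_contra hx
    have h2 : 2 ≤ (out s(x,y)).card := by
      have hsub2 : ({x, y} : Finset V) ⊆ out s(x,y) := by
        intro v hv
        simp only [Finset.mem_insert, Finset.mem_singleton] at hv
        rcases hv with rfl | rfl <;> simp [hout, hx, hy]
      calc 2 = ({x,y} : Finset V).card := by
            rw [Finset.card_insert_of_notMem (by simp [hadj.ne]),
              Finset.card_singleton]
      _ ≤ _ := Finset.card_le_card hsub2
    have hlt : M.card < ∑ e ∈ M, (out e).card := by
      calc M.card = ∑ _e ∈ M, 1 := by simp
      _ < _ := Finset.sum_lt_sum hone ⟨s(x,y), he, by omega⟩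
    omega
end

section
/- Let G be a König-Egerváry graph, M a maximum matching, and S a stable set of G. Then S is a maximum stable set if and only if S contains all vertices exposed by M (not covered by M) and exactly one endpoint of each edge of M. -/
open Finset

variable {V : Type*}

/-- The endpoints of a `Sym2` as a `Finset`. -/
noncomputable def symEnds [DecidableEq V] : Sym2 V → Finset V :=
  Sym2.lift ⟨fun x y => {x, y}, fun x y => Finset.pair_comm x y⟩

lemma symEnds_mk [DecidableEq V] (x y : V) : symEnds s(x, y) = {x, y} := rfl

lemma mem_symEnds [DecidableEq V] (e : Sym2 V) (v : V) : v ∈ symEnds e ↔ v ∈ e := by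
  induction e using Sym2.inductionOn with
  | hf x y => simp [symEnds_mk, Sym2.mem_iff]

lemma card_le_stabNum [Fintype V] (G : SimpleGraph V) (s : Finset V)
    (hs : IsStableSet G s) : s.card ≤ stabNum G := by
  apply le_csSup
  · exact ⟨Fintype.card V, fun n ⟨t, _, ht⟩ => ht ▸ t.card_le_univ⟩
  · exact ⟨s, hs, rfl⟩

theorem stmt_5 [Fintype V] (G : SimpleGraph V)
    (hKE : KonigEgervary G)
    (M : Finset (Sym2 V)) (hM : IsMaxMatching G M)
    (S : Finset V) (hS : IsStableSet G S) :
    IsMaxStableSet G S ↔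
      ((∀ v : V, (∀ e ∈ M, v ∉ e) → v ∈ S) ∧
        ∀ e ∈ M, ∀ x y : V, e = s(x, y) → (x ∈ S ↔ y ∉ S)) := by
  classical
  -- edges of M are edges of G, hence have two distinct endpoints
  have hedge : ∀ e ∈ M, ∃ x y : V, x ≠ y ∧ e = s(x, y) ∧ G.Adj x y := by
    intro e he
    induction e using Sym2.inductionOn with
    | hf x y =>
      have hadj : G.Adj x y := (SimpleGraph.mem_edgeSet G).mp (hM.1.1 _ he)
      exact ⟨x, y, hadj.ne, rfl, hadj⟩
  -- exposed vertices
  set Exp : Finset V := univ.filter (fun v => ∀ e ∈ M, v ∉ e) with hExp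
  have hmemExp : ∀ v : V, v ∈ Exp ↔ ∀ e ∈ M, v ∉ e := by
    intro v; simp [hExp]
  -- pairwise disjointness of endpoint sets
  have hdisj : ∀ e ∈ M, ∀ f ∈ M, e ≠ f → Disjoint (symEnds e) (symEnds f) := by
    intro e he f hf hne
    rw [Finset.disjoint_left]
    intro v hv hvf
    exact hM.1.2 e he f hf hne v ((mem_symEnds e v).mp hv) ((mem_symEnds f v).mp hvf)
  have hcard2 : ∀ e ∈ M, (symEnds e).card = 2 := by
    intro e he
    obtain ⟨x, y, hxy, rfl, -⟩ := hedge e he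
    rw [symEnds_mk]
    exact Finset.card_pair hxy
  -- the covered vertices
  set Cov : Finset V := M.biUnion symEnds with hCov
  have hmemCov : ∀ v : V, v ∈ Cov ↔ ∃ e ∈ M, v ∈ e := by
    intro v; simp [hCov, mem_symEnds]
  have hCovCard : Cov.card = 2 * M.card := by
    rw [hCov, Finset.card_biUnion hdisj]
    rw [Finset.sum_congr rfl hcard2, Finset.sum_const, smul_eq_mul, Nat.mul_comm]
  have hunivsplit : (univ : Finset V) = Exp ∪ Cov := by
    ext v
    simp only [Finset.mem_union, Finset.mem_univ, true_iff]
    by_cases h : ∃ e ∈ M, v ∈ e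
    · exact Or.inr ((hmemCov v).mpr h)
    · exact Or.inl ((hmemExp v).mpr (by push_neg at h; exact h))
  have hdisjEC : Disjoint Exp Cov := by
    rw [Finset.disjoint_left]
    intro v hv hvc
    obtain ⟨e, he, hve⟩ := (hmemCov v).mp hvc
    exact (hmemExp v).mp hv e he hve
  have hn : Fintype.card V = Exp.card + 2 * M.card := by
    rw [← Finset.card_univ, hunivsplit, Finset.card_union_of_disjoint hdisjEC, hCovCard]
  -- decomposition of S
  have hSsplit : S.card = (S ∩ Exp).card + ∑ e ∈ M, (S ∩ symEnds e).card := by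
    have h1 : S = (S ∩ Exp) ∪ (S ∩ Cov) := by
      rw [← Finset.inter_union_distrib_left, ← hunivsplit, Finset.inter_univ]
    have h2 : S ∩ Cov = M.biUnion (fun e => S ∩ symEnds e) := by
      rw [hCov, Finset.inter_biUnion]
    have hd : Disjoint (S ∩ Exp) (M.biUnion fun e => S ∩ symEnds e) := by
      refine Finset.disjoint_of_subset_left Finset.inter_subset_right ?_
      refine Finset.disjoint_of_subset_right ?_ hdisjEC
      rw [← h2]; exact Finset.inter_subset_right
    have hd2 : ∀ e ∈ M, ∀ f ∈ M, e ≠ f → Disjoint (S ∩ symEnds e) (S ∩ symEnds f) := by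
      intro e he f hf hne
      exact Finset.disjoint_of_subset_left Finset.inter_subset_right
        (Finset.disjoint_of_subset_right Finset.inter_subset_right (hdisj e he f hf hne))
    calc S.card = ((S ∩ Exp) ∪ M.biUnion fun e => S ∩ symEnds e).card := by
          conv_lhs => rw [h1, h2]
      _ = (S ∩ Exp).card + (M.biUnion fun e => S ∩ symEnds e).card :=
          Finset.card_union_of_disjoint hd
      _ = (S ∩ Exp).card + ∑ e ∈ M, (S ∩ symEnds e).card := by
          rw [Finset.card_biUnion hd2]
  -- per-edge bound
  have hle1 : ∀ e ∈ M, (S ∩ symEnds e).card ≤ 1 := by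
    intro e he
    obtain ⟨x, y, hxy, rfl, hadj⟩ := hedge e he
    rw [symEnds_mk]
    apply Finset.card_le_one.mpr
    intro a ha b hb
    simp only [Finset.mem_inter, Finset.mem_insert, Finset.mem_singleton] at ha hb
    obtain ⟨haS, (rfl | rfl)⟩ := ha <;> obtain ⟨hbS, (rfl | rfl)⟩ := hb
    · rfl
    · exact absurd hadj (hS a haS b hbS)
    · exact absurd hadj (hS b hbS a haS)
    · rfl
  have hmcard : M.card = matchNum G := hM.2
  have hKE' : stabNum G + matchNum G = Fintype.card V := by
    rw [hKE]; exact Nat.card_eq_fintype_card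
  have hsum_le : ∑ e ∈ M, (S ∩ symEnds e).card ≤ M.card := by
    calc ∑ e ∈ M, (S ∩ symEnds e).card ≤ ∑ _e ∈ M, 1 := Finset.sum_le_sum hle1
      _ = M.card := by simp
  have hinterExp_le : (S ∩ Exp).card ≤ Exp.card :=
    Finset.card_le_card Finset.inter_subset_right
  constructor
  · rintro ⟨-, hmax⟩
    have hScard : S.card = Exp.card + M.card := by omega
    have hEq1 : (S ∩ Exp).card = Exp.card := by omega
    have hEq2 : ∑ e ∈ M, (S ∩ symEnds e).card = M.card := by omega
    have hExpS : S ∩ Exp = Exp :=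
      Finset.eq_of_subset_of_card_le Finset.inter_subset_right (le_of_eq hEq1.symm)
    have hterm : ∀ e ∈ M, (S ∩ symEnds e).card = 1 := by
      by_contra hcon
      push_neg at hcon
      obtain ⟨e, he, hne1⟩ := hcon
      have hlt : ∑ e ∈ M, (S ∩ symEnds e).card < ∑ _e ∈ M, 1 := by
        refine Finset.sum_lt_sum hle1 ⟨e, he, ?_⟩
        exact lt_of_le_of_ne (hle1 e he) hne1
      simp only [Finset.sum_const, smul_eq_mul, mul_one] at hlt
      omega
    constructor
    · intro v hv
      have hvE : v ∈ Exp := (hmemExp v).mpr hv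
      rw [← hExpS] at hvE
      exact (Finset.mem_inter.mp hvE).1
    · rintro e he x y rfl
      have hadj : G.Adj x y := (SimpleGraph.mem_edgeSet G).mp (hM.1.1 _ he)
      have hxy : x ≠ y := hadj.ne
      have hc : (S ∩ ({x, y} : Finset V)).card = 1 := by
        have := hterm _ he; rwa [symEnds_mk] at this
      constructor
      · intro hx hy
        have hsub : ({x, y} : Finset V) ⊆ S ∩ {x, y} := by
          intro z hz
          simp only [Finset.mem_insert, Finset.mem_singleton] at hz
          rcases hz with rfl | rfl
          · exact Finset.mem_inter.mpr ⟨hx, by simp⟩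
          · exact Finset.mem_inter.mpr ⟨hy, by simp⟩
        have := Finset.card_le_card hsub
        rw [Finset.card_pair hxy, hc] at this
        omega
      · intro hy
        obtain ⟨z, hz⟩ := Finset.card_eq_one.mp hc
        have hzmem : z ∈ S ∩ ({x, y} : Finset V) := by rw [hz]; exact Finset.mem_singleton_self z
        simp only [Finset.mem_inter, Finset.mem_insert, Finset.mem_singleton] at hzmem
        obtain ⟨hzS, (rfl | rfl)⟩ := hzmem
        · exact hzS
        · exact absurd hzS hy
  · rintro ⟨h1, h2⟩
    have hExpS : Exp ⊆ S := by
      intro v hv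
      exact h1 v ((hmemExp v).mp hv)
    have hEq1 : (S ∩ Exp).card = Exp.card := by
      rw [Finset.inter_eq_right.mpr hExpS]
    have hterm : ∀ e ∈ M, (S ∩ symEnds e).card = 1 := by
      intro e he
      obtain ⟨x, y, hxy, rfl, hadj⟩ := hedge e he
      have hiff := h2 _ he x y rfl
      rw [symEnds_mk]
      by_cases hx : x ∈ S
      · have hy : y ∉ S := hiff.mp hx
        have : S ∩ ({x, y} : Finset V) = {x} := by
          ext z
          simp only [Finset.mem_inter, Finset.mem_insert, Finset.mem_singleton]
          constructor
          · rintro ⟨hzS, (rfl | rfl)⟩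
            · rfl
            · exact absurd hzS hy
          · rintro rfl; exact ⟨hx, Or.inl rfl⟩
        rw [this, Finset.card_singleton]
      · have hy : y ∈ S := by
          by_contra hy
          exact hx (hiff.mpr hy)
        have : S ∩ ({x, y} : Finset V) = {y} := by
          ext z
          simp only [Finset.mem_inter, Finset.mem_insert, Finset.mem_singleton]
          constructor
          · rintro ⟨hzS, (rfl | rfl)⟩
            · exact absurd hzS hx
            · rfl
          · rintro rfl; exact ⟨hy, Or.inr rfl⟩
        rw [this, Finset.card_singleton]
    have hEq2 : ∑ e ∈ M, (S ∩ symEnds e).card = M.card := by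
      rw [Finset.sum_congr rfl hterm]; simp
    exact ⟨hS, by omega⟩
end

section
/- Every α⁺-stable König-Egerváry graph has a perfect matching or a near-perfect matching (a matching covering all but exactly one vertex). -/
open Finset

variable {V : Type*}

/-!
Fix a maximum matching `M` and let `U` be the set of vertices it leaves uncovered. Then
`|V| = |U| + 2μ`, so the König-Egerváry condition reads `α = |U| + μ`. A stable set meets
every edge of `M` at most once, so a maximum stable set has at least `|U|` vertices outside the
edges of `M`, hence contains all of `U`. Thus `U` lies in every maximum stable set, and
α⁺-stability forces `|U| ≤ 1`: joining two vertices of `U` by an edge would destroy every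
maximum stable set.
-/

section

variable {G : SimpleGraph V}

section

variable [Fintype V]

lemma bddAbove_stableSetCards (G : SimpleGraph V) :
    BddAbove {n | ∃ s : Finset V, IsStableSet G s ∧ s.card = n} :=
  ⟨Fintype.card V, fun _ ⟨s, _, hs⟩ => hs ▸ s.card_le_univ⟩

lemma exists_isMaxStableSet (G : SimpleGraph V) : ∃ s, IsMaxStableSet G s := by
  refine Nat.sSup_mem ?_ (bddAbove_stableSetCards G)
  exact ⟨0, ∅, by simp [IsStableSet]⟩

lemma bddAbove_matchingCards (G : SimpleGraph V) :
    BddAbove {n | ∃ M : Finset (Sym2 V), IsMatchingSet G M ∧ M.card = n} :=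
  ⟨Fintype.card (Sym2 V), fun _ ⟨M, _, hM⟩ => hM ▸ M.card_le_univ⟩

lemma exists_isMaxMatching (G : SimpleGraph V) : ∃ M, IsMaxMatching G M := by
  refine Nat.sSup_mem ?_ (bddAbove_matchingCards G)
  exact ⟨0, ∅, by simp [IsMatchingSet]⟩

end

section

variable [DecidableEq V]

def matchedVerts (M : Finset (Sym2 V)) : Finset V :=
  M.biUnion Sym2.toFinset

lemma mem_matchedVerts {M : Finset (Sym2 V)} {v : V} :
    v ∈ matchedVerts M ↔ ∃ e ∈ M, v ∈ e := by
  simp [matchedVerts, Sym2.mem_toFinset]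

lemma IsMatchingSet.card_matchedVerts {M : Finset (Sym2 V)} (hM : IsMatchingSet G M) :
    (matchedVerts M).card = 2 * M.card := by
  rw [matchedVerts, card_biUnion, sum_const_nat, mul_comm]
  · exact fun e he => Sym2.card_toFinset_of_not_isDiag e (G.not_isDiag_of_mem_edgeSet (hM.1 e he))
  · intro e he f hf hef
    exact disjoint_left.mpr fun v hve hvf =>
      hM.2 e he f hf hef v (Sym2.mem_toFinset.mp hve) (Sym2.mem_toFinset.mp hvf)

lemma IsMatchingSet.card_inter_matchedVerts_le {M : Finset (Sym2 V)} (hM : IsMatchingSet G M)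
    {S : Finset V} (hS : IsStableSet G S) : (S ∩ matchedVerts M).card ≤ M.card := by
  rw [matchedVerts, inter_biUnion, ← mul_one M.card]
  refine card_biUnion_le_card_mul _ _ 1 fun e he => card_le_one.mpr ?_
  induction e using Sym2.ind with
  | _ a b =>
    have hab : G.Adj a b := hM.1 _ he
    simp only [mem_inter, Sym2.mem_toFinset, Sym2.mem_iff]
    rintro x ⟨hx, rfl | rfl⟩ y ⟨hy, rfl | rfl⟩
    exacts [rfl, (hS x hx y hy hab).elim, (hS x hx y hy hab.symm).elim, rfl]

variable [Fintype V]

def unmatchedVerts (M : Finset (Sym2 V)) : Finset V :=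
  univ \ matchedVerts M

lemma mem_unmatchedVerts {M : Finset (Sym2 V)} {v : V} :
    v ∈ unmatchedVerts M ↔ ∀ e ∈ M, v ∉ e := by
  simp [unmatchedVerts, mem_matchedVerts]

lemma IsMatchingSet.card_unmatchedVerts_add {M : Finset (Sym2 V)} (hM : IsMatchingSet G M) :
    (unmatchedVerts M).card + 2 * M.card = Fintype.card V := by
  rw [unmatchedVerts, ← hM.card_matchedVerts, card_sdiff_add_card_eq_card (subset_univ _),
    card_univ]

lemma IsMaxMatching.unmatchedVerts_subset_of_konigEgervary {M : Finset (Sym2 V)}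
    (hM : IsMaxMatching G M) (hKE : KonigEgervary G) {S : Finset V} (hS : IsMaxStableSet G S) :
    unmatchedVerts M ⊆ S := by
  have hcard : (unmatchedVerts M).card ≤ (S \ matchedVerts M).card := by
    have hcount := hM.1.card_unmatchedVerts_add
    have hsplit := card_inter_add_card_sdiff S (matchedVerts M)
    have hmatched := hM.1.card_inter_matchedVerts_le hS.1
    rw [KonigEgervary, Nat.card_eq_fintype_card, ← hS.2, ← hM.2] at hKE
    omega
  have houtside : S \ matchedVerts M ⊆ unmatchedVerts M :=
    sdiff_subset_sdiff (subset_univ S) le_rfl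
  exact eq_of_subset_of_card_le houtside hcard ▸ sdiff_subset

end

lemma AlphaPlusStable.card_le_one_of_subset_isMaxStableSet [Fintype V]
    (hst : AlphaPlusStable G) {T : Finset V} (hT : ∀ S, IsMaxStableSet G S → T ⊆ S) :
    T.card ≤ 1 := by
  refine card_le_one.mpr fun u hu v hv => by_contra fun huv => ?_
  let G' := G ⊔ SimpleGraph.fromEdgeSet {s(u, v)}
  have hG'uv : G'.Adj u v := Or.inr ⟨rfl, huv⟩
  obtain ⟨S₀, hS₀⟩ := exists_isMaxStableSet G
  obtain ⟨S, hS, hScard⟩ := exists_isMaxStableSet G'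
  have hSG : IsMaxStableSet G S :=
    ⟨fun x hx y hy hxy => hS x hx y hy (Or.inl hxy),
      hScard.trans (hst u v huv (hS₀.1 u (hT S₀ hS₀ hu) v (hT S₀ hS₀ hv)))⟩
  exact hS u (hT S hSG hu) v (hT S hSG hv) hG'uv

lemma IsMatchingSet.hasPerfectMatching_or_hasNearPerfectMatching [Fintype V] [DecidableEq V]
    {M : Finset (Sym2 V)} (hM : IsMatchingSet G M) (hU : (unmatchedVerts M).card ≤ 1) :
    HasPerfectMatching G ∨ HasNearPerfectMatching G := by
  have hcovered : ∀ v, v ∉ unmatchedVerts M → ∃ e ∈ M, v ∈ e := fun v hv => by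
    simpa [mem_unmatchedVerts] using hv
  rcases Nat.le_one_iff_eq_zero_or_eq_one.mp hU with h0 | h1
  · exact .inl ⟨M, hM, fun v => hcovered v (by simp [card_eq_zero.mp h0])⟩
  · obtain ⟨u, hu⟩ := card_eq_one.mp h1
    exact .inr ⟨M, hM, u, mem_unmatchedVerts.mp (by simp [hu]),
      fun v hvu => hcovered v (by simpa [hu] using hvu)⟩

end

theorem stmt_8 [Fintype V] (G : SimpleGraph V)
    (hKE : KonigEgervary G) (hst : AlphaPlusStable G) :
    HasPerfectMatching G ∨ HasNearPerfectMatching G := by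
  classical
  obtain ⟨M, hM⟩ := exists_isMaxMatching G
  exact hM.1.hasPerfectMatching_or_hasNearPerfectMatching
    (hst.card_le_one_of_subset_isMaxStableSet fun _ hS =>
      hM.unmatchedVerts_subset_of_konigEgervary hKE hS)
end

section
/- If G is a König-Egerváry graph with a perfect matching and exactly one vertex x lies outside all maximum stable sets (|∩{V − S : S ∈ Ω(G)}| = 1), then there exists an edge xy such that H = G − {x, y} is a König-Egerváry graph with α(H) = μ(H) in which every vertex lies in some maximum stable set and also every vertex is avoided by some maximum stable set. -/
open Finset

variable {V : Type*}

section Helpers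

variable {W : Type*} [Fintype W] [DecidableEq W]

lemma aux_stab_bddAbove (G : SimpleGraph W) :
    BddAbove {n | ∃ s : Finset W, IsStableSet G s ∧ s.card = n} := by
  refine ⟨Fintype.card W, ?_⟩
  rintro n ⟨s, -, rfl⟩
  simpa using s.card_le_univ

lemma aux_exists_maxStable (G : SimpleGraph W) :
    ∃ s : Finset W, IsMaxStableSet G s := by
  have h := Nat.sSup_mem (s := {n | ∃ s : Finset W, IsStableSet G s ∧ s.card = n})
    ⟨0, ∅, by intro a ha; simp at ha, by simp⟩ (aux_stab_bddAbove G)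
  obtain ⟨s, hs, hcard⟩ := h
  exact ⟨s, hs, hcard⟩

lemma aux_le_stabNum (G : SimpleGraph W) {s : Finset W} (hs : IsStableSet G s) :
    s.card ≤ stabNum G :=
  le_csSup (aux_stab_bddAbove G) ⟨s, hs, rfl⟩

lemma aux_match_bddAbove (G : SimpleGraph W) :
    BddAbove {n | ∃ M : Finset (Sym2 W), IsMatchingSet G M ∧ M.card = n} := by
  refine ⟨Fintype.card (Sym2 W), ?_⟩
  rintro n ⟨M, -, rfl⟩
  simpa using M.card_le_univ

lemma aux_exists_maxMatching (G : SimpleGraph W) :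
    ∃ M : Finset (Sym2 W), IsMatchingSet G M ∧ M.card = matchNum G := by
  have h := Nat.sSup_mem (s := {n | ∃ M : Finset (Sym2 W), IsMatchingSet G M ∧ M.card = n})
    ⟨0, ∅, ⟨by simp, by simp⟩, by simp⟩ (aux_match_bddAbove G)
  obtain ⟨M, hM, hcard⟩ := h
  exact ⟨M, hM, hcard⟩

lemma aux_le_matchNum (G : SimpleGraph W) {M : Finset (Sym2 W)} (hM : IsMatchingSet G M) :
    M.card ≤ matchNum G :=
  le_csSup (aux_match_bddAbove G) ⟨M, hM, rfl⟩

lemma aux_endpoints_card (G : SimpleGraph W) {e : Sym2 W} (he : e ∈ G.edgeSet) :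
    (univ.filter (· ∈ e)).card = 2 := by
  revert he
  induction e using Sym2.ind with
  | _ a b =>
    intro he
    have hadj : G.Adj a b := G.mem_edgeSet.mp he
    have hne : a ≠ b := G.ne_of_adj hadj
    have : univ.filter (· ∈ s(a, b)) = {a, b} := by
      ext v
      simp [Sym2.mem_iff]
    rw [this, card_insert_of_notMem (by simpa using hne), card_singleton]

lemma aux_two_mul_matching_le (G : SimpleGraph W) {M : Finset (Sym2 W)}
    (hM : IsMatchingSet G M) : 2 * M.card ≤ Fintype.card W := by
  have hdisj : ∀ e ∈ M, ∀ f ∈ M, e ≠ f →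
      Disjoint (univ.filter (· ∈ e)) (univ.filter (· ∈ f)) := by
    intro e he f hf hef
    rw [Finset.disjoint_left]
    intro v hv hv'
    exact hM.2 e he f hf hef v (by simpa using hv) (by simpa using hv')
  calc 2 * M.card = ∑ e ∈ M, (univ.filter (· ∈ e)).card := by
        rw [Finset.sum_congr rfl fun e he => aux_endpoints_card G (hM.1 e he)]
        simp [mul_comm]
    _ = (M.biUnion fun e => univ.filter (· ∈ e)).card := (Finset.card_biUnion hdisj).symm
    _ ≤ Fintype.card W := by simpa using (M.biUnion fun e => univ.filter (· ∈ e)).card_le_univ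

lemma aux_two_mul_perfect (G : SimpleGraph W) {M : Finset (Sym2 W)}
    (hM : IsPerfectMatchingSet G M) : 2 * M.card = Fintype.card W := by
  have hdisj : ∀ e ∈ M, ∀ f ∈ M, e ≠ f →
      Disjoint (univ.filter (· ∈ e)) (univ.filter (· ∈ f)) := by
    intro e he f hf hef
    rw [Finset.disjoint_left]
    intro v hv hv'
    exact hM.1.2 e he f hf hef v (by simpa using hv) (by simpa using hv')
  have hcov : (M.biUnion fun e => univ.filter (· ∈ e)) = univ := by
    ext v
    simp only [mem_biUnion, mem_filter, mem_univ, true_and, iff_true]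
    exact hM.2 v
  calc 2 * M.card = ∑ e ∈ M, (univ.filter (· ∈ e)).card := by
        rw [Finset.sum_congr rfl fun e he => aux_endpoints_card G (hM.1.1 e he)]
        simp [mul_comm]
    _ = (M.biUnion fun e => univ.filter (· ∈ e)).card := (Finset.card_biUnion hdisj).symm
    _ = Fintype.card W := by rw [hcov]; simp

/-- Weak duality: `|S| + |M| ≤ |W|`. -/
lemma aux_weak_duality (G : SimpleGraph W) {S : Finset W} {M : Finset (Sym2 W)}
    (hS : IsStableSet G S) (hM : IsMatchingSet G M) :
    S.card + M.card ≤ Fintype.card W := by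
  classical
  set f : Sym2 W → W := fun e => if e.out.1 ∈ S then e.out.2 else e.out.1 with hf
  have hmem : ∀ e, f e ∈ e := by
    intro e
    by_cases h : e.out.1 ∈ S <;> simp only [hf, h, if_true, if_false] <;>
      [exact Sym2.out_snd_mem e; exact Sym2.out_fst_mem e]
  have hnot : ∀ e ∈ M, f e ∉ S := by
    intro e he
    have hout : s(e.out.1, e.out.2) = e := Quot.out_eq e
    have hadj : G.Adj e.out.1 e.out.2 := by
      rw [← SimpleGraph.mem_edgeSet, hout]; exact hM.1 e he
    by_cases h : e.out.1 ∈ S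
    · simp only [hf, h, if_true]
      intro h2
      exact hS _ h _ h2 hadj
    · simpa only [hf, h, if_false] using h
  have hcard : M.card ≤ (univ \ S).card := by
    refine Finset.card_le_card_of_injOn f (fun e he => ?_) ?_
    · exact mem_sdiff.mpr ⟨mem_univ _, hnot e he⟩
    · intro e he e' he' hef
      by_contra hne
      exact hM.2 e (by simpa using he) e' (by simpa using he') hne (f e) (hmem e)
        (hef ▸ hmem e')
  have h2 : (univ \ S).card = Fintype.card W - S.card := by
    rw [Finset.card_sdiff_of_subset (subset_univ S)]; simp
  have h3 : S.card ≤ Fintype.card W := by simpa using S.card_le_univ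
  omega

/-- If a perfect matching has size ≤ that of a stable set, every matching edge
meets the stable set. -/
lemma aux_edge_meets (G : SimpleGraph W) {S : Finset W} {M : Finset (Sym2 W)}
    (hM : IsPerfectMatchingSet G M) (hS : IsStableSet G S) (hcard : M.card ≤ S.card) :
    ∀ e ∈ M, ∃ v ∈ S, v ∈ e := by
  classical
  choose g hgM hgm using hM.2
  have hinj : ∀ v₁ ∈ S, ∀ v₂ ∈ S, g v₁ = g v₂ → v₁ = v₂ := by
    intro v₁ h₁ v₂ h₂ hg
    by_contra hne
    have hv₂ : v₂ ∈ g v₁ := hg ▸ hgm v₂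
    have he : g v₁ = s(v₁, v₂) := (Sym2.mem_and_mem_iff hne).mp ⟨hgm v₁, hv₂⟩
    have hadj : G.Adj v₁ v₂ := by
      rw [← SimpleGraph.mem_edgeSet, ← he]; exact hM.1.1 _ (hgM v₁)
    exact hS _ h₁ _ h₂ hadj
  have hsurj := Finset.surj_on_of_inj_on_of_card_le (s := S) (t := M)
    (fun v _ => g v) (fun v _ => hgM v) (fun v₁ v₂ h₁ h₂ => hinj v₁ h₁ v₂ h₂) hcard
  intro e he
  obtain ⟨v, hv, rfl⟩ := hsurj e he
  exact ⟨v, hv, hgm v⟩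

end Helpers


set_option maxHeartbeats 1000000 in
theorem stmt_11 [Fintype V] [DecidableEq V] (G : SimpleGraph V)
    (hKE : KonigEgervary G) (hpm : HasPerfectMatching G)
    (x : V)
    (hx : {v : V | ∀ S : Finset V, IsMaxStableSet G S → v ∉ S} = {x}) :
    ∃ y : V, G.Adj x y ∧
      (KonigEgervary (G.induce ({x, y}ᶜ : Set V)) ∧
        stabNum (G.induce ({x, y}ᶜ : Set V)) = matchNum (G.induce ({x, y}ᶜ : Set V)) ∧
        (∀ v : ({x, y}ᶜ : Set V), ∃ S, IsMaxStableSet (G.induce ({x, y}ᶜ : Set V)) S ∧ v ∈ S) ∧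
        (∀ v : ({x, y}ᶜ : Set V), ∃ S, IsMaxStableSet (G.induce ({x, y}ᶜ : Set V)) S ∧ v ∉ S)) := by
  classical
  obtain ⟨M, hMm, hMcov⟩ := hpm
  -- basic facts about x
  have hxS : ∀ S, IsMaxStableSet G S → x ∉ S := by
    have hxmem : x ∈ {v : V | ∀ S : Finset V, IsMaxStableSet G S → v ∉ S} := by
      rw [hx]; rfl
    exact hxmem
  have hmem_of_ne : ∀ z : V, z ≠ x → ∃ S, IsMaxStableSet G S ∧ z ∈ S := by
    intro z hz
    by_contra h
    push_neg at h
    have hzmem : z ∈ {v : V | ∀ S : Finset V, IsMaxStableSet G S → v ∉ S} := h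
    rw [hx] at hzmem
    exact hz hzmem
  -- the numbers
  have hn : 2 * M.card = Fintype.card V := aux_two_mul_perfect G ⟨hMm, hMcov⟩
  have hμ : matchNum G = M.card := by
    obtain ⟨M', hM', hM'c⟩ := aux_exists_maxMatching G
    have h1 := aux_two_mul_matching_le G hM'
    have h2 := aux_le_matchNum G hMm
    omega
  have hα : stabNum G = M.card := by
    have hNat : Nat.card V = Fintype.card V := Nat.card_eq_fintype_card
    unfold KonigEgervary at hKE
    omega
  -- the partner y of x
  obtain ⟨e₀, he₀M, hxe₀⟩ := hMcov x
  obtain ⟨y, he₀⟩ := Sym2.mem_iff_exists.mp hxe₀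
  have hadj : G.Adj x y := G.mem_edgeSet.mp (he₀ ▸ hMm.1 e₀ he₀M)
  have hxy : x ≠ y := G.ne_of_adj hadj
  have hye₀ : y ∈ e₀ := by rw [he₀]; exact Sym2.mem_mk_right x y
  -- every maximum stable set contains y
  have hyS : ∀ S, IsMaxStableSet G S → y ∈ S := by
    intro S hS
    have hle : M.card ≤ S.card := by rw [hS.2, hα]
    obtain ⟨v, hvS, hve⟩ := aux_edge_meets G ⟨hMm, hMcov⟩ hS.1 hle e₀ he₀M
    rw [he₀, Sym2.mem_iff] at hve
    rcases hve with rfl | rfl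
    · exact absurd hvS (hxS S hS)
    · exact hvS
  have hWmem : ∀ v : V, v ∈ ({x, y}ᶜ : Set V) ↔ v ≠ x ∧ v ≠ y := by
    intro v; simp [not_or]
  have hcardW : Fintype.card ({x, y}ᶜ : Set V) = Fintype.card V - 2 := by
    rw [Fintype.card_compl_set]
    congr 1
    simp [Set.card_insert, hxy]
  -- transfer of stable sets from G down to (G.induce ({x, y}ᶜ : Set V))
  have down : ∀ S : Finset V, IsStableSet G S → x ∉ S →
      ∃ T : Finset ({x, y}ᶜ : Set V), IsStableSet (G.induce ({x, y}ᶜ : Set V)) T ∧ T.card = (S.erase y).card ∧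
        ∀ v : ({x, y}ᶜ : Set V), (v ∈ T ↔ ↑v ∈ S.erase y) := by
    intro S hS hxnS
    refine ⟨(S.erase y).subtype (· ∈ ({x, y}ᶜ : Set V)), ?_, ?_, fun v => Finset.mem_subtype⟩
    · intro a ha b hb hab
      rw [Finset.mem_subtype] at ha hb
      exact hS _ (mem_of_mem_erase ha) _ (mem_of_mem_erase hb) hab
    · rw [Finset.card_subtype, Finset.filter_true_of_mem]
      intro v hv
      rw [hWmem]
      exact ⟨fun hq => hxnS (by rw [← hq]; exact mem_of_mem_erase hv), ne_of_mem_erase hv⟩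
  -- the pulled-down matching
  have hxe : ∀ e ∈ M, e ≠ e₀ → ∀ v ∈ e, v ∈ ({x, y}ᶜ : Set V) := by
    intro e he hne v hv
    rw [hWmem]
    constructor
    · intro hvx; exact hMm.2 e he e₀ he₀M hne v hv (by rw [hvx]; exact hxe₀)
    · intro hvy; exact hMm.2 e he e₀ he₀M hne v hv (by rw [hvy]; exact hye₀)
  have pull : ∀ e : Sym2 V, e ∈ M.erase e₀ → ∃ e' : Sym2 ({x, y}ᶜ : Set V), Sym2.map Subtype.val e' = e := by
    intro e he
    obtain ⟨hne, heM⟩ := Finset.mem_erase.mp he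
    refine ⟨s(⟨e.out.1, hxe e heM hne _ (Sym2.out_fst_mem e)⟩,
      ⟨e.out.2, hxe e heM hne _ (Sym2.out_snd_mem e)⟩), ?_⟩
    rw [Sym2.map_pair_eq]
    exact Quot.out_eq e
  choose pf hpf using pull
  set M' : Finset (Sym2 ({x, y}ᶜ : Set V)) := (M.erase e₀).attach.image (fun e => pf e.1 e.2) with hM'
  have hM'map : ∀ f ∈ M', Sym2.map Subtype.val f ∈ M.erase e₀ := by
    intro f hf
    obtain ⟨e, -, rfl⟩ := Finset.mem_image.mp hf
    rw [hpf e.1 e.2]; exact e.2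
  have hM'card : M'.card = M.card - 1 := by
    have hinj : Set.InjOn (fun e : {e // e ∈ M.erase e₀} => pf e.1 e.2) ↑(M.erase e₀).attach := by
      intro a _ b _ hab
      have hab2 : pf a.1 a.2 = pf b.1 b.2 := hab
      have : (a : Sym2 V) = b := by rw [← hpf a.1 a.2, ← hpf b.1 b.2, hab2]
      exact Subtype.ext this
    rw [hM', Finset.card_image_of_injOn hinj, Finset.card_attach,
      Finset.card_erase_of_mem he₀M]
  have hM'match : IsMatchingSet (G.induce ({x, y}ᶜ : Set V)) M' := by
    constructor
    · intro f hf
      have hm : Sym2.map Subtype.val f ∈ G.edgeSet :=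
        hMm.1 _ (Finset.mem_of_mem_erase (hM'map f hf))
      revert hm
      induction f using Sym2.ind with
      | _ u v =>
        intro hm
        rw [Sym2.map_pair_eq] at hm
        exact (G.induce ({x, y}ᶜ : Set V)).mem_edgeSet.mpr (G.mem_edgeSet.mp hm)
    · intro f hf g hg hfg v hvf hvg
      have h1 := hM'map f hf
      have h2 := hM'map g hg
      have hne : Sym2.map Subtype.val f ≠ Sym2.map Subtype.val g :=
        fun h => hfg (Sym2.map.injective Subtype.val_injective h)
      exact hMm.2 _ (Finset.mem_of_mem_erase h1) _ (Finset.mem_of_mem_erase h2) hne ↑v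
        (Sym2.mem_map.mpr ⟨v, hvf, rfl⟩) (Sym2.mem_map.mpr ⟨v, hvg, rfl⟩)
  have hMpos : 1 ≤ M.card := Finset.card_pos.mpr ⟨e₀, he₀M⟩
  -- μ((G.induce ({x, y}ᶜ : Set V)))
  have hμH : matchNum (G.induce ({x, y}ᶜ : Set V)) = M.card - 1 := by
    obtain ⟨N, hN, hNc⟩ := aux_exists_maxMatching (G.induce ({x, y}ᶜ : Set V))
    have h1 := aux_two_mul_matching_le (G.induce ({x, y}ᶜ : Set V)) hN
    have h2 := aux_le_matchNum (G.induce ({x, y}ᶜ : Set V)) hM'match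
    rw [hcardW] at h1
    omega
  -- α((G.induce ({x, y}ᶜ : Set V)))
  have hαH : stabNum (G.induce ({x, y}ᶜ : Set V)) = M.card - 1 := by
    obtain ⟨S, hS⟩ := aux_exists_maxStable G
    obtain ⟨T, hT, hTc, -⟩ := down S hS.1 (hxS S hS)
    have hTcard : T.card = M.card - 1 := by
      rw [hTc, Finset.card_erase_of_mem (hyS S hS), hS.2, hα]
    have h1 := aux_le_stabNum (G.induce ({x, y}ᶜ : Set V)) hT
    obtain ⟨N, hN, hNc⟩ := aux_exists_maxMatching (G.induce ({x, y}ᶜ : Set V))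
    obtain ⟨T', hT'⟩ := aux_exists_maxStable (G.induce ({x, y}ᶜ : Set V))
    have h2 := aux_weak_duality (G.induce ({x, y}ᶜ : Set V)) hT'.1 hN
    rw [hcardW] at h2
    have h3 := hT'.2
    omega
  have hNatW : Nat.card ({x, y}ᶜ : Set V) = Fintype.card V - 2 := by
    rw [Nat.card_eq_fintype_card, hcardW]
  refine ⟨y, hadj, ?_, ?_, ?_, ?_⟩
  · show KonigEgervary (G.induce ({x, y}ᶜ : Set V))
    unfold KonigEgervary
    rw [hαH, hμH, hNatW]
    omega
  · show stabNum (G.induce ({x, y}ᶜ : Set V)) = matchNum (G.induce ({x, y}ᶜ : Set V))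
    rw [hαH, hμH]
  · intro v
    have hvW : (v : V) ∈ ({x, y}ᶜ : Set V) := v.2
    rw [hWmem] at hvW
    obtain ⟨S, hS, hvS⟩ := hmem_of_ne ↑v hvW.1
    obtain ⟨T, hT, hTc, hTmem⟩ := down S hS.1 (hxS S hS)
    refine ⟨T, ⟨hT, ?_⟩, ?_⟩
    · rw [hTc, Finset.card_erase_of_mem (hyS S hS), hS.2, hα, hαH]
    · rw [hTmem v, Finset.mem_erase]
      exact ⟨hvW.2, hvS⟩
  · intro v
    have hvW : (v : V) ∈ ({x, y}ᶜ : Set V) := v.2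
    rw [hWmem] at hvW
    obtain ⟨e, heM, hve⟩ := hMcov ↑v
    obtain ⟨w, hew⟩ := Sym2.mem_iff_exists.mp hve
    have hvadj : G.Adj ↑v w := G.mem_edgeSet.mp (hew ▸ hMm.1 e heM)
    have hee₀ : e ≠ e₀ := by
      rintro rfl
      rw [he₀, Sym2.mem_iff] at hve
      rcases hve with h | h
      exacts [hvW.1 h, hvW.2 h]
    have hwe : w ∈ e := by rw [hew]; exact Sym2.mem_mk_right _ _
    have hwx : w ≠ x := fun hq => hMm.2 e heM e₀ he₀M hee₀ w hwe (by rw [hq]; exact hxe₀)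
    obtain ⟨S, hS, hwS⟩ := hmem_of_ne w hwx
    have hvnS : (v : V) ∉ S := fun h => hS.1 ↑v h w hwS hvadj
    obtain ⟨T, hT, hTc, hTmem⟩ := down S hS.1 (hxS S hS)
    refine ⟨T, ⟨hT, ?_⟩, ?_⟩
    · rw [hTc, Finset.card_erase_of_mem (hyS S hS), hS.2, hα, hαH]
    · rw [hTmem v]
      exact fun h => hvnS (Finset.mem_of_mem_erase h)
end

section
/- If G is a König-Egerváry graph, then the neighborhood of the set A of vertices common to all maximum stable sets equals the set B of vertices belonging to no maximum stable set: N(∩{S : S ∈ Ω(G)}) = ∩{V − S : S ∈ Ω(G)}. -/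
open Finset

variable {V : Type*}

lemma exists_max_stable_s18 [Fintype V] (G : SimpleGraph V) : ∃ S, IsMaxStableSet G S := by
  have hmem : stabNum G ∈ {n | ∃ s : Finset V, IsStableSet G s ∧ s.card = n} := by
    apply Nat.sSup_mem
    · exact ⟨0, ∅, fun x hx => absurd hx (by simp), rfl⟩
    · exact ⟨Fintype.card V, fun n ⟨s, _, hc⟩ => hc ▸ Finset.card_le_univ s⟩
  obtain ⟨s, hs, hc⟩ := hmem
  exact ⟨s, hs, hc⟩

lemma exists_max_matching_s18 [Fintype V] (G : SimpleGraph V) : ∃ M, IsMaxMatching G M := by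
  classical
  have hmem : matchNum G ∈ {n | ∃ M : Finset (Sym2 V), IsMatchingSet G M ∧ M.card = n} := by
    apply Nat.sSup_mem
    · exact ⟨0, ∅, ⟨fun e he => absurd he (by simp), fun e he => absurd he (by simp)⟩, rfl⟩
    · exact ⟨Fintype.card (Sym2 V), fun n ⟨M, _, hc⟩ => hc ▸ Finset.card_le_univ M⟩
  obtain ⟨M, hM, hc⟩ := hmem
  exact ⟨M, hM, hc⟩

lemma key_lemma [Fintype V] (G : SimpleGraph V) (hKE : KonigEgervary G)
    (M : Finset (Sym2 V)) (hM : IsMaxMatching G M)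
    (S : Finset V) (hS : IsMaxStableSet G S) :
    (∀ v : V, v ∉ S → ∃ e ∈ M, v ∈ e) ∧
      (∀ e ∈ M, ∀ x y : V, e = s(x, y) → x ∉ S → y ∈ S) := by
  classical
  -- choice of endpoint outside S for each edge of M
  have hout : ∀ e : Sym2 V, e ∈ M → ∃ x, x ∈ e ∧ x ∉ S := by
    intro e he
    induction e using Sym2.ind with
    | _ a b =>
      have hadj : G.Adj a b := (SimpleGraph.mem_edgeSet G).mp (hM.1.1 _ he)
      by_contra h
      push_neg at h
      have ha : a ∈ S := h a (by simp)
      have hb : b ∈ S := h b (by simp)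
      exact hS.1 a ha b hb hadj
  set f : {e // e ∈ M} → V := fun e => Classical.choose (hout e.1 e.2) with hf
  have hfmem : ∀ e : {e // e ∈ M}, f e ∈ e.1 := fun e => (Classical.choose_spec (hout e.1 e.2)).1
  have hfnot : ∀ e : {e // e ∈ M}, f e ∉ S := fun e => (Classical.choose_spec (hout e.1 e.2)).2
  have hfinj : Function.Injective f := by
    intro e1 e2 h12
    by_contra hne
    have hne' : e1.1 ≠ e2.1 := fun h => hne (Subtype.ext h)
    exact hM.1.2 e1.1 e1.2 e2.1 e2.2 hne' (f e1) (hfmem e1) (h12 ▸ hfmem e2)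
  -- image of f
  set T : Finset V := Finset.univ.image (fun e : {e // e ∈ M} => f e) with hT
  have hTcard : T.card = M.card := by
    rw [hT, Finset.card_image_of_injective _ hfinj, Finset.card_univ, Fintype.card_coe]
  have hTsub : T ⊆ Finset.univ \ S := by
    intro v hv
    rw [hT, Finset.mem_image] at hv
    obtain ⟨e, _, he⟩ := hv
    simp [Finset.mem_sdiff, he ▸ hfnot e]
  have hcompl : (Finset.univ \ S).card = matchNum G := by
    have h1 : (Finset.univ \ S).card = Fintype.card V - S.card := by
      rw [Finset.card_sdiff_of_subset (Finset.subset_univ S), Finset.card_univ]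
    rw [h1, hS.2]
    have := hKE
    rw [KonigEgervary, Nat.card_eq_fintype_card] at this
    omega
  have hTeq : T = Finset.univ \ S := by
    apply Finset.eq_of_subset_of_card_le hTsub
    rw [hTcard, hM.2, hcompl]
  constructor
  · intro v hv
    have : v ∈ T := by
      rw [hTeq, Finset.mem_sdiff]
      exact ⟨Finset.mem_univ v, hv⟩
    rw [hT, Finset.mem_image] at this
    obtain ⟨e, _, he⟩ := this
    exact ⟨e.1, e.2, he ▸ hfmem e⟩
  · intro e he x y hxy hx
    by_contra hy
    have hxT : x ∈ T := by rw [hTeq, Finset.mem_sdiff]; exact ⟨Finset.mem_univ x, hx⟩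
    have hyT : y ∈ T := by rw [hTeq, Finset.mem_sdiff]; exact ⟨Finset.mem_univ y, hy⟩
    rw [hT, Finset.mem_image] at hxT hyT
    obtain ⟨e1, _, he1⟩ := hxT
    obtain ⟨e2, _, he2⟩ := hyT
    have hadj : G.Adj x y := by
      have h' := hM.1.1 e he
      rw [hxy] at h'
      exact (SimpleGraph.mem_edgeSet G).mp h'
    have hxy' : x ≠ y := hadj.ne
    have hxe : x ∈ e := by rw [hxy]; simp
    have hye : y ∈ e := by rw [hxy]; simp
    have he1e : e1.1 = e := by
      by_contra hne
      exact hM.1.2 e1.1 e1.2 e he hne x (he1 ▸ hfmem e1) hxe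
    have he2e : e2.1 = e := by
      by_contra hne
      exact hM.1.2 e2.1 e2.2 e he hne y (he2 ▸ hfmem e2) hye
    have : e1 = e2 := Subtype.ext (he1e.trans he2e.symm)
    exact hxy' (he1 ▸ he2 ▸ this ▸ rfl)

theorem stmt_18 [Fintype V] (G : SimpleGraph V)
    (hKE : KonigEgervary G) :
    {v : V | ∃ a : V, (∀ S : Finset V, IsMaxStableSet G S → a ∈ S) ∧ G.Adj a v} =
      {v : V | ∀ S : Finset V, IsMaxStableSet G S → v ∉ S} := by
  ext v
  simp only [Set.mem_setOf_eq]
  constructor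
  · rintro ⟨a, haS, hadj⟩ S hS hv
    exact hS.1 a (haS S hS) v hv hadj
  · intro hv
    obtain ⟨M, hM⟩ := exists_max_matching_s18 G
    obtain ⟨S₀, hS₀⟩ := exists_max_stable_s18 G
    obtain ⟨e, he, hve⟩ := (key_lemma G hKE M hM S₀ hS₀).1 v (hv S₀ hS₀)
    have hkey := fun S hS => (key_lemma G hKE M hM S hS).2 e he
    revert hve he hkey
    induction e using Sym2.ind with
    | _ x y =>
      intro he hve hkey
      have hadj : G.Adj x y := (SimpleGraph.mem_edgeSet G).mp (hM.1.1 _ he)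
      rcases Sym2.mem_iff.mp hve with rfl | rfl
      · refine ⟨y, fun S hS => hkey S hS v y rfl (hv S hS), hadj.symm⟩
      · refine ⟨x, fun S hS => hkey S hS v x ?_ (hv S hS), hadj⟩
        rw [Sym2.eq_swap]
end
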